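/- arXiv:2506.04452 — 2 statements merged into one kernel-verified Lean document; each statement's English description precedes it below -/
import Mathlib

section
/- Let A_1,...,A_ℓ ∈ Q^{m×n}, b_1,...,b_ℓ ∈ Q^m, D = {x ∈ Z^n : l ≤ x ≤ u}, and let A^∀ x ≤ b^∀ be an additional system. Then the mixed integer program consisting of constraints -A_l x - (L^l - b_l - r^l)∘y^l ≤ -L^l for all l, v_l ≤ sum_j y^l_j, v ≤ v_l, v ≥ 1, A^∀ x ≤ b^∀, x ∈ D, and all v, v_l, y^l_j binary, is feasible if and only if there exists x ∈ D with A^∀ x ≤ b^∀ such that for every l ∈ [ℓ] the system A_l x ≤ b_l is violated in at least one row. -/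
/-! The constraint `-a - (L - b - r) y ≤ -L` is a big-M encoding: for `y = 0` it reduces to the
valid lower bound `L ≤ a`, and for `y = 1` to `a ≥ b + r`, which by the gap property means that
the row `a ≤ b` is violated. So a binary `y` can be switched on precisely at the violated rows, and the
constraints on `v` and `v_l` force at least one switched-on row in every system. -/

open Finset

theorem indicator_row_iff {a L b r : ℚ} {y : ℤ} (hL : L ≤ a) (hgap : a > b ↔ a ≥ b + r)
    (hy : y = 0 ∨ y = 1) : -a - (L - b - r) * (y : ℚ) ≤ -L ↔ (y = 1 → b < a) := by
  rcases hy with rfl | rfl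
  · simpa using hL
  · simp only [Int.cast_one, mul_one, forall_const]
    constructor
    · intro h
      exact hgap.mpr (by linarith)
    · intro h
      linarith [hgap.mp h]

theorem one_le_sum_iff_exists_eq_one {ι : Type*} [Fintype ι] {y : ι → ℤ}
    (hy : ∀ j, y j = 0 ∨ y j = 1) : 1 ≤ ∑ j, y j ↔ ∃ j, y j = 1 := by
  constructor
  · intro hsum
    by_contra! hne
    have hzero : ∀ j, y j = 0 := fun j => (hy j).resolve_right (hne j)
    simp [hzero] at hsum
  · rintro ⟨j, hj⟩
    rw [← hj]
    exact single_le_sum (fun i _ => by rcases hy i with h | h <;> omega) (mem_univ j)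

theorem stmt5_general (ℓ m n mU : ℕ)
    (A : Fin ℓ → Fin m → Fin n → ℚ) (b : Fin ℓ → Fin m → ℚ)
    (l u : Fin n → ℤ) (L r : Fin ℓ → Fin m → ℚ)
    (AU : Fin mU → Fin n → ℚ) (bU : Fin mU → ℚ)
    (hL : ∀ k j (x : Fin n → ℤ), (∀ i, l i ≤ x i ∧ x i ≤ u i) →
      L k j ≤ ∑ i, A k j i * (x i : ℚ))
    (hgap : ∀ k j (x : Fin n → ℤ), (∀ i, l i ≤ x i ∧ x i ≤ u i) →
      ((∑ i, A k j i * (x i : ℚ)) > b k j ↔ (∑ i, A k j i * (x i : ℚ)) ≥ b k j + r k j)) :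
    (∃ (x : Fin n → ℤ) (y : Fin ℓ → Fin m → ℤ) (v : ℤ) (vl : Fin ℓ → ℤ),
      (∀ i, l i ≤ x i ∧ x i ≤ u i) ∧
      (∀ k j, y k j = 0 ∨ y k j = 1) ∧ (v = 0 ∨ v = 1) ∧ (∀ k, vl k = 0 ∨ vl k = 1) ∧
      (∀ k j, -(∑ i, A k j i * (x i : ℚ)) - (L k j - b k j - r k j) * (y k j : ℚ)
        ≤ -(L k j)) ∧
      (∀ k, vl k ≤ ∑ j, y k j) ∧
      (∀ k, v ≤ vl k) ∧ 1 ≤ v ∧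
      (∀ q, ∑ i, AU q i * (x i : ℚ) ≤ bU q))
    ↔ (∃ x : Fin n → ℤ, (∀ i, l i ≤ x i ∧ x i ≤ u i) ∧
        (∀ q, ∑ i, AU q i * (x i : ℚ) ≤ bU q) ∧
        ∀ k, ∃ j, ¬ ((∑ i, A k j i * (x i : ℚ)) ≤ b k j)) := by
  constructor
  · rintro ⟨x, y, v, vl, hbox, hy, -, -, hrow, hvl, hv, hv1, hU⟩
    refine ⟨x, hbox, hU, fun k => ?_⟩
    obtain ⟨j, hj⟩ := (one_le_sum_iff_exists_eq_one (hy k)).mp ((hv1.trans (hv k)).trans (hvl k))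
    exact ⟨j, not_le.mpr
      ((indicator_row_iff (hL k j x hbox) (hgap k j x hbox) (hy k j)).mp (hrow k j) hj)⟩
  · rintro ⟨x, hbox, hU, hviol⟩
    set y : Fin ℓ → Fin m → ℤ := fun k j => if b k j < ∑ i, A k j i * (x i : ℚ) then 1 else 0
    have hy : ∀ k j, y k j = 0 ∨ y k j = 1 := fun k j => by unfold y; split_ifs <;> simp
    have hy_viol : ∀ k j, y k j = 1 → b k j < ∑ i, A k j i * (x i : ℚ) := fun k j => by
      unfold y; split_ifs with h <;> simp [h]
    refine ⟨x, y, 1, fun _ => 1, hbox, hy, Or.inr rfl, fun _ => Or.inr rfl,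
      fun k j => (indicator_row_iff (hL k j x hbox) (hgap k j x hbox) (hy k j)).mpr (hy_viol k j),
      fun k => ?_, fun _ => le_rfl, le_rfl, hU⟩
    obtain ⟨j, hj⟩ := hviol k
    exact (one_le_sum_iff_exists_eq_one (hy k)).mpr ⟨j, if_pos (not_le.mp hj)⟩

/-- The mixed integer program used in the `wins` call for a universal
outer block — consisting of the indicator constraints
`-A_l x - (L^l_j - (b_l)_j - r^l_j) y^l_j ≤ -L^l_j` for all systems `l` and rows `j`,
`v_l ≤ ∑_j y^l_j`, `v ≤ v_l`, `v ≥ 1`, the universal system `A^∀ x ≤ b^∀`, `x` in the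
integer box `D`, and all `v, v_l, y^l_j` binary — is feasible if and only if there is
`x ∈ D` with `A^∀ x ≤ b^∀` violating at least one row of every system `A_l x ≤ b_l`. -/
theorem stmt5 (ℓ m n mU : ℕ)
    (A : Fin ℓ → Fin m → Fin n → ℚ) (b : Fin ℓ → Fin m → ℚ)
    (l u : Fin n → ℤ) (L r : Fin ℓ → Fin m → ℚ)
    (AU : Fin mU → Fin n → ℚ) (bU : Fin mU → ℚ)
    (hL : ∀ k j (x : Fin n → ℤ), (∀ i, l i ≤ x i ∧ x i ≤ u i) →
      L k j ≤ ∑ i, A k j i * (x i : ℚ))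
    (hr : ∀ k j, 0 < r k j)
    (hgap : ∀ k j (x : Fin n → ℤ), (∀ i, l i ≤ x i ∧ x i ≤ u i) →
      ((∑ i, A k j i * (x i : ℚ)) > b k j ↔ (∑ i, A k j i * (x i : ℚ)) ≥ b k j + r k j)) :
    (∃ (x : Fin n → ℤ) (y : Fin ℓ → Fin m → ℤ) (v : ℤ) (vl : Fin ℓ → ℤ),
      (∀ i, l i ≤ x i ∧ x i ≤ u i) ∧
      (∀ k j, y k j = 0 ∨ y k j = 1) ∧ (v = 0 ∨ v = 1) ∧ (∀ k, vl k = 0 ∨ vl k = 1) ∧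
      (∀ k j, -(∑ i, A k j i * (x i : ℚ)) - (L k j - b k j - r k j) * (y k j : ℚ)
        ≤ -(L k j)) ∧
      (∀ k, vl k ≤ ∑ j, y k j) ∧
      (∀ k, v ≤ vl k) ∧ 1 ≤ v ∧
      (∀ q, ∑ i, AU q i * (x i : ℚ) ≤ bU q))
    ↔ (∃ x : Fin n → ℤ, (∀ i, l i ≤ x i ∧ x i ≤ u i) ∧
        (∀ q, ∑ i, AU q i * (x i : ℚ) ≤ bU q) ∧
        ∀ k, ∃ j, ¬ ((∑ i, A k j i * (x i : ℚ)) ≤ b k j)) :=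
  stmt5_general ℓ m n mU A b l u L r AU bU hL hgap
end

section
/- Countermove splitting for universal outer quantifier: consider an abstraction ∀X ∈ D_X : {Ψ_1,...,Ψ_k} whose subgames share only the outer variables X (their inner variables are disjoint). If for some τ ∈ D_X every subgame Ψ_i[τ] is won by the universal player via some inner assignment τ_i, then the combined assignment τ' = (τ, τ_{1},...,τ_{k}) is a winning move of the whole abstraction for the universal player. Contrapositively, if the abstraction is won by the existential player, then for every τ ∈ D_X at least one subgame Ψ_i[τ] is won by the existential player. -/
/-- Countermove splitting for a universal outer quantifier. Consider an
abstraction `∀ X ∈ D_X : {Ψ₁,…,Ψₖ}` whose subgames share only the outer variables `X`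
(their inner variable copies are disjoint), with `UWin i τ μ` meaning that the
universal player wins subgame `Ψᵢ[τ]` via the inner assignment `μ ∈ Dβ i`. If for some
`τ ∈ D_X` every subgame `Ψᵢ[τ]` is won by the universal player via some inner
assignment `τᵢ`, then the combined assignment `τ' = (τ, τ₁, …, τₖ)` is a winning move
of the whole abstraction for the universal player (she wins every subgame).
Contrapositively, if the abstraction is won by the existential player (no such
combined universal winning move exists), then for every `τ ∈ D_X` at least one subgame
`Ψᵢ[τ]` is won by the existential player (every inner assignment fails). -/
theorem stmt12 {α : Type} {ι : Type} {β : ι → Type}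
    (DX : Set α) (Dβ : ∀ i, Set (β i))
    (hDβ : ∀ i, (Dβ i).Nonempty)
    (UWin : ∀ i, α → β i → Prop) :
    (∀ τ ∈ DX, (∀ i, ∃ μ ∈ Dβ i, UWin i τ μ) →
      ∃ g : ∀ i, β i, (∀ i, g i ∈ Dβ i) ∧ ∀ i, UWin i τ (g i)) ∧
    ((¬ ∃ τ ∈ DX, ∃ g : ∀ i, β i, (∀ i, g i ∈ Dβ i) ∧ ∀ i, UWin i τ (g i)) →
      ∀ τ ∈ DX, ∃ i, ∀ μ ∈ Dβ i, ¬ UWin i τ μ) := by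
  constructor
  · intro τ _ h
    choose g hg hw using h
    exact ⟨g, hg, hw⟩
  · intro hno τ hτ
    by_contra hc
    push_neg at hc
    apply hno
    refine ⟨τ, hτ, ?_⟩
    have h : ∀ i, ∃ μ ∈ Dβ i, UWin i τ μ := hc
    choose g hg hw using h
    exact ⟨g, hg, hw⟩
end
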